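/- Let n ≥ 5 and k = 3. Let c assign an integer c_J to every nonfrozen 3-element subset J of {1,…,n}, and suppose that for every ℓ ∈ {1,…,n} and every 2-element subset {a,b} of {1,…,n}∖{ℓ} that is nonfrozen in {1,…,n}∖{ℓ}, one has Σ c_J ≥ 0, where the sum is over all nonfrozen 3-element subsets J of {1,…,n} with ∂_ℓ(J) = {a,b} (i.e. the element Σ_J c_J β_J lies in the cone 𝒴_{3,n} of weighted blade arrangements with nonnegative curvature on every facet). Then for all i, j ∈ {1,…,n}: if {i, i+1, j} is a nonfrozen 3-element subset (i+1 taken mod n) then c_{{i,i+1,j}} ≥ 0, and if {i, j, j+1} is a nonfrozen 3-element subset (j+1 taken mod n) then c_{{i,j,j+1}} ≥ 0. In other words, only the coefficients of totally nonfrozen vertices (those whose subset has three singleton cyclic intervals) can be negative. -/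

import Mathlib

open Finset

/-- Cyclic successor in `Fin n`. -/
def csucc {n : ℕ} (x : Fin n) : Fin n :=
  ⟨(x.val + 1) % n, Nat.mod_lt _ (Nat.lt_of_le_of_lt (Nat.zero_le _) x.isLt)⟩

/-- The cyclic interval `[i, j]` in `Fin n`. -/
def cInterval {n : ℕ} (i j : Fin n) : Finset (Fin n) :=
  univ.filter fun x => (x - i).val ≤ (j - i).val

/-- `K` is frozen in `S` if its elements are consecutive in the cyclic order induced
on `S` from `(1,2,…,n)`, i.e. `K` is the intersection of `S` with a cyclic interval. -/
def FrozenIn {n : ℕ} (S K : Finset (Fin n)) : Prop :=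
  ∃ i j : Fin n, K = S ∩ cInterval i j

instance {n : ℕ} (S K : Finset (Fin n)) : Decidable (FrozenIn S K) :=
  inferInstanceAs (Decidable (∃ i j : Fin n, K = S ∩ cInterval i j))

/-- The first element of `K` met when reading `j, j+1, j+2, …` cyclically
(`j` itself if `j ∈ K`); junk value `j` if `K = ∅`. -/
def nextIn {n : ℕ} (K : Finset (Fin n)) (j : Fin n) : Fin n :=
  if h : (univ.filter fun r : Fin n => j + r ∈ K).Nonempty then
    j + (univ.filter fun r : Fin n => j + r ∈ K).min' h
  else j

/-- `∂_ℓ(K) = K ∖ {m}`, where `m = ℓ` if `ℓ ∈ K` and otherwise `m` is the first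
element of `K` met when reading `ℓ+1, ℓ+2, …` cyclically. -/
def bdSet {n : ℕ} (ℓ : Fin n) (K : Finset (Fin n)) : Finset (Fin n) :=
  K.erase (nextIn K ℓ)

/-! For the facet `ℓ = i` and the pair `K = {i+1, j}`, the only `J` with `∂_i(J) = K` is
`{i, i+1, j}`: if `i ∉ J`, then `∂_i` removes `i+1` itself. So the facet inequality for
`(i, K)` is exactly `0 ≤ c {i, i+1, j}`. It applies because `K` is nonfrozen in `[n] ∖ {i}`:
a cyclic interval of `[n] ∖ {i}` starting at `i+1` extends back through `i` to a cyclic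
interval of `[n]`. The case `{i, j, j+1}` is the same with `ℓ = j`. -/

namespace Fin

variable {n : ℕ} [NeZero n]

lemma val_add_one_of_add_one_ne_zero {y : Fin n} (h : y + 1 ≠ 0) : (y + 1).val = y.val + 1 := by
  rw [val_add, val_one']
  rcases Nat.lt_or_ge (y.val + 1) n with hy | hy
  · rw [Nat.add_mod_mod, Nat.mod_eq_of_lt hy]
  · refine absurd (Fin.ext ?_) h
    rw [val_add, val_one', Nat.add_mod_mod, show y.val + 1 = n by omega, Nat.mod_self, val_zero]

lemma val_sub_eq_val_sub_add_one_add_one {x ℓ : Fin n} (h : x ≠ ℓ) :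
    (x - ℓ).val = (x - (ℓ + 1)).val + 1 := by
  rw [← val_add_one_of_add_one_ne_zero] <;> rw [sub_add_eq_sub_sub, sub_add_cancel]
  exact sub_ne_zero.mpr h

end Fin

lemma csucc_eq_add_one {n : ℕ} [NeZero n] (x : Fin n) : csucc x = x + 1 := by
  ext
  simp [csucc, Fin.val_add]

section CyclicInterval

variable {n : ℕ}

@[simp]
lemma mem_cInterval {a b x : Fin n} : x ∈ cInterval a b ↔ (x - a).val ≤ (b - a).val := by
  simp [cInterval]

lemma right_mem_cInterval (a b : Fin n) : b ∈ cInterval a b := by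
  simp

variable [NeZero n]

lemma eq_add_one_of_notMem_cInterval {a b ℓ : Fin n} (hℓ : ℓ ∉ cInterval a b)
    (hℓ1 : ℓ + 1 ∈ cInterval a b) : a = ℓ + 1 := by
  by_contra hne
  have hsucc : ℓ - a + 1 = ℓ + 1 - a := sub_add_eq_add_sub ..
  rw [mem_cInterval] at hℓ hℓ1
  have hne0 : ℓ - a + 1 ≠ 0 := hsucc ▸ sub_ne_zero.mpr (Ne.symm hne)
  rw [← hsucc, Fin.val_add_one_of_add_one_ne_zero hne0] at hℓ1
  omega

lemma insert_cInterval_add_one {ℓ b : Fin n} (hb : b ≠ ℓ) :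
    insert ℓ (cInterval (ℓ + 1) b) = cInterval ℓ b := by
  ext x
  rcases eq_or_ne x ℓ with rfl | hx
  · simp
  · simp only [mem_insert, hx, false_or, mem_cInterval,
      Fin.val_sub_eq_val_sub_add_one_add_one hx, Fin.val_sub_eq_val_sub_add_one_add_one hb]
    omega

lemma FrozenIn.insert_of_add_one_mem {ℓ : Fin n} {K : Finset (Fin n)}
    (hK : FrozenIn (univ.erase ℓ) K) (hℓK : ℓ + 1 ∈ K) : FrozenIn univ (insert ℓ K) := by
  obtain ⟨a, b, rfl⟩ := hK
  rw [erase_inter, univ_inter] at hℓK ⊢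
  by_cases hℓ : ℓ ∈ cInterval a b
  · exact ⟨a, b, by rw [univ_inter, insert_erase hℓ]⟩
  · obtain rfl := eq_add_one_of_notMem_cInterval hℓ (mem_of_mem_erase hℓK)
    have hb : b ≠ ℓ := fun h => hℓ (h ▸ right_mem_cInterval _ _)
    exact ⟨ℓ, b, by rw [univ_inter, erase_eq_of_notMem hℓ, insert_cInterval_add_one hb]⟩

end CyclicInterval

section Boundary

variable {n : ℕ} [NeZero n]

lemma nextIn_eq_self {K : Finset (Fin n)} {j : Fin n} (h : j ∈ K) : nextIn K j = j := by
  have h0 : (0 : Fin n) ∈ univ.filter fun r : Fin n => j + r ∈ K := by simpa using h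
  rw [nextIn, dif_pos ⟨0, h0⟩, le_antisymm (min'_le _ _ h0) (Fin.zero_le _), add_zero]

lemma nextIn_eq_add_one {K : Finset (Fin n)} {j : Fin n} (hj : j ∉ K) (hj1 : j + 1 ∈ K) :
    nextIn K j = j + 1 := by
  set R := univ.filter fun r : Fin n => j + r ∈ K
  have h1 : (1 : Fin n) ∈ R := by simpa [R] using hj1
  rw [nextIn, dif_pos ⟨1, h1⟩]
  have hmem : j + R.min' ⟨1, h1⟩ ∈ K := by simpa [R] using R.min'_mem ⟨1, h1⟩
  have hle : (R.min' ⟨1, h1⟩).val ≤ (1 : Fin n).val := min'_le R 1 h1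
  have hpos : (R.min' ⟨1, h1⟩).val ≠ 0 :=
    Fin.val_ne_zero_iff.mpr fun h0 => hj (by simpa [h0] using hmem)
  have hone : (1 : Fin n).val ≤ 1 := Fin.val_one' n ▸ Nat.mod_le 1 n
  rw [Fin.ext (by omega : (R.min' ⟨1, h1⟩).val = (1 : Fin n).val)]

lemma bdSet_insert_self {K : Finset (Fin n)} {ℓ : Fin n} (h : ℓ ∉ K) :
    bdSet ℓ (insert ℓ K) = K := by
  rw [bdSet, nextIn_eq_self (mem_insert_self ℓ K), erase_insert h]

lemma eq_insert_of_bdSet_eq {J K : Finset (Fin n)} {ℓ : Fin n} (hK : ℓ + 1 ∈ K)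
    (hJ : bdSet ℓ J = K) : J = insert ℓ K := by
  subst hJ
  by_cases hℓ : ℓ ∈ J
  · rw [bdSet, nextIn_eq_self hℓ, insert_erase hℓ]
  · rw [bdSet, nextIn_eq_add_one hℓ (mem_of_mem_erase hK)] at hK
    exact absurd hK (notMem_erase _ _)

lemma filter_bdSet_eq_singleton {ℓ : Fin n} {K : Finset (Fin n)} (hℓ : ℓ ∉ K)
    (hK : ℓ + 1 ∈ K)
    (h3 : (insert ℓ K).card = 3) (hnf : ¬ FrozenIn univ (insert ℓ K)) :
    (powersetCard 3 (univ : Finset (Fin n))).filter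
        (fun J => ¬ FrozenIn univ J ∧ bdSet ℓ J = K) = {insert ℓ K} := by
  ext J
  simp only [mem_filter, mem_powersetCard, subset_univ, true_and, mem_singleton]
  constructor
  · exact fun ⟨_, _, hJ⟩ => eq_insert_of_bdSet_eq hK hJ
  · rintro rfl
    exact ⟨h3, hnf, bdSet_insert_self hℓ⟩

end Boundary

/-- `∑_J c_J β_J` lies in the cone `𝒴_{3,n}`. -/
def FacetwiseNonneg {n : ℕ} (c : Finset (Fin n) → ℤ) : Prop :=
  ∀ ℓ : Fin n, ∀ K : Finset (Fin n),
    K ⊆ univ.erase ℓ → K.card = 2 → ¬ FrozenIn (univ.erase ℓ) K →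
    0 ≤ ∑ J ∈ (powersetCard 3 (univ : Finset (Fin n))).filter
        (fun J => ¬ FrozenIn univ J ∧ bdSet ℓ J = K), c J

lemma FacetwiseNonneg.coeff_insert_nonneg {n : ℕ} [NeZero n] {c : Finset (Fin n) → ℤ}
    (hc : FacetwiseNonneg c) {ℓ : Fin n} {K : Finset (Fin n)} (hK : ℓ + 1 ∈ K)
    (hK2 : K.card ≤ 2) (h3 : (insert ℓ K).card = 3) (hnf : ¬ FrozenIn univ (insert ℓ K)) :
    0 ≤ c (insert ℓ K) := by
  have hℓ : ℓ ∉ K := fun h => by rw [insert_eq_of_mem h] at h3; omega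
  have hsub : K ⊆ univ.erase ℓ := fun x hx =>
    mem_erase.mpr ⟨ne_of_mem_of_not_mem hx hℓ, mem_univ x⟩
  have hcard : K.card = 2 := by rw [card_insert_of_notMem hℓ] at h3; omega
  have hK_nf : ¬ FrozenIn (univ.erase ℓ) K := fun hF => hnf (hF.insert_of_add_one_mem hK)
  simpa [filter_bdSet_eq_singleton hℓ hK h3 hnf] using hc ℓ K hsub hcard hK_nf

theorem stmt17_general {n : ℕ} (c : Finset (Fin n) → ℤ)
    (hbd : ∀ ℓ : Fin n, ∀ K : Finset (Fin n),
      K ⊆ univ.erase ℓ → K.card = 2 → ¬ FrozenIn (univ.erase ℓ) K →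
      0 ≤ ∑ J ∈ (powersetCard 3 (univ : Finset (Fin n))).filter
          (fun J => ¬ FrozenIn univ J ∧ bdSet ℓ J = K), c J) :
    ∀ i j : Fin n,
      (({i, csucc i, j} : Finset (Fin n)).card = 3 →
        ¬ FrozenIn univ ({i, csucc i, j} : Finset (Fin n)) →
        0 ≤ c {i, csucc i, j}) ∧
      (({i, j, csucc j} : Finset (Fin n)).card = 3 →
        ¬ FrozenIn univ ({i, j, csucc j} : Finset (Fin n)) →
        0 ≤ c {i, j, csucc j}) := by
  intro i j
  have : NeZero n := ⟨i.pos.ne'⟩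
  have hperm : ({i, j, j + 1} : Finset (Fin n)) = {j, j + 1, i} := by
    rw [insert_comm, pair_comm]
  simp only [csucc_eq_add_one, hperm]
  exact ⟨FacetwiseNonneg.coeff_insert_nonneg hbd (by simp) card_le_two,
    FacetwiseNonneg.coeff_insert_nonneg hbd (by simp) card_le_two⟩

/-- for `k = 3`, `n ≥ 5`, if the integer weights `c` on nonfrozen
3-subsets have nonnegative induced weights on every facet (i.e. for every `ℓ` and
every nonfrozen pair `{a,b} ⊆ {1,…,n}∖{ℓ}`, `Σ_{∂_ℓ(J) = {a,b}} c_J ≥ 0`), then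
`c_{{i,i+1,j}} ≥ 0` and `c_{{i,j,j+1}} ≥ 0` whenever these sets are nonfrozen
3-element subsets: only coefficients of totally nonfrozen vertices can be negative. -/
theorem stmt17 {n : ℕ} (hn : 5 ≤ n) (c : Finset (Fin n) → ℤ)
    (hbd : ∀ ℓ : Fin n, ∀ K : Finset (Fin n),
      K ⊆ univ.erase ℓ → K.card = 2 → ¬ FrozenIn (univ.erase ℓ) K →
      0 ≤ ∑ J ∈ (powersetCard 3 (univ : Finset (Fin n))).filter
          (fun J => ¬ FrozenIn univ J ∧ bdSet ℓ J = K), c J) :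
    ∀ i j : Fin n,
      (({i, csucc i, j} : Finset (Fin n)).card = 3 →
        ¬ FrozenIn univ ({i, csucc i, j} : Finset (Fin n)) →
        0 ≤ c {i, csucc i, j}) ∧
      (({i, j, csucc j} : Finset (Fin n)).card = 3 →
        ¬ FrozenIn univ ({i, j, csucc j} : Finset (Fin n)) →
        0 ≤ c {i, j, csucc j}) :=
  stmt17_general c hbd
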